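/- Assume (A1), and fix t ∈ {0,1}. Then for every scalar l ∈ (0,1), every scalar v ∈ ℝ, and every bounded measurable function τ† : 𝒳 → ℝ, the remainder term of the one-step expansion for ν_t satisfies the exact identity v + E[ (R/l)·( 1{T=t}·Y / π_{t1} + (1 − 1{T=t} / π_{t1})·τ†(X) − v ) ] − ν_t = (1 − λ₁/l)·(v − ν_t). -/

import Mathlib

open MeasureTheory ProbabilityTheory Set

noncomputable section

/-- The σ-algebra on `Ω` generated by the map `X`. -/
def sigmaX {Ω 𝒳 : Type*} [MeasurableSpace 𝒳] (X : Ω → 𝒳) : MeasurableSpace Ω :=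
  MeasurableSpace.comap X inferInstance

/-- Conditional expectation of `f` given the σ-algebra `m'` under the measure `μ`. -/
def cexp {Ω : Type*} (m' : MeasurableSpace Ω) {m0 : MeasurableSpace Ω} (μ : Measure Ω)
    (f : Ω → ℝ) : Ω → ℝ :=
  MeasureTheory.condExp m' μ f

/-- Conditional probability of the event `s` given the σ-algebra `m'`, as a function. -/
def cprob {Ω : Type*} (m' : MeasurableSpace Ω) {m0 : MeasurableSpace Ω} (μ : Measure Ω)
    (s : Set Ω) : Ω → ℝ :=
  cexp m' μ (s.indicator fun _ => (1 : ℝ))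

/-- `f` and `g` are conditionally independent given the σ-algebra `m'` under `μ` :
conditional probabilities of joint events factorize. -/
def CondIndepFunGiven {Ω β γ : Type*} [MeasurableSpace β]
    [MeasurableSpace γ] (m' : MeasurableSpace Ω) {m0 : MeasurableSpace Ω}
    (f : Ω → β) (g : Ω → γ) (μ : Measure Ω) : Prop :=
  ∀ s u, MeasurableSet s → MeasurableSet u →
    cprob m' μ (f ⁻¹' s ∩ g ⁻¹' u)
      =ᵐ[μ] fun ω => cprob m' μ (f ⁻¹' s) ω * cprob m' μ (g ⁻¹' u) ω

/-! The event `R = 1` has mass `λ₁`, so integrating against `R / l` gives `λ₁ / l` times the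
mean under `μ = P(· | R = 1)`. Under `μ`, the indicator `I` of `T = t` has mean `π_{t1}` and is
independent of `Y_t` and of `τ†(X)` by (A1); on `T = t` the observed `Y` is `Y_t`. So the
weighted term `I Y / π_{t1}` has mean `ν_t`, the augmentation term `(1 - I / π_{t1}) τ†(X)` has
mean zero whatever `τ†` is, the integral equals `(λ₁ / l) (ν_t - v)`, and the identity is
algebra. The lower bound `ε` on the propensity score keeps `π_{t1}` away from zero. -/

theorem le_measureReal_of_ae_le_cprob {Ω : Type*} {m m0 : MeasurableSpace Ω} (hm : m ≤ m0)
    {μ : Measure Ω} [IsProbabilityMeasure μ] {S : Set Ω} (hS : MeasurableSet S) {ε : ℝ}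
    (hε : ∀ᵐ ω ∂μ, ε ≤ cprob m μ S ω) : ε ≤ μ.real S :=
  calc ε = ∫ _, ε ∂μ := by simp
    _ ≤ ∫ ω, cprob m μ S ω ∂μ :=
      integral_mono_ae (integrable_const ε) integrable_condExp hε
    _ = μ.real S := by
      rw [cprob, cexp, integral_condExp hm, integral_indicator_const _ hS, smul_eq_mul, mul_one]

section

variable {Ω : Type*} [MeasurableSpace Ω] {μ : Measure Ω}

theorem setIntegral_eq_measureReal_mul_integral_cond [IsFiniteMeasure μ] (A : Set Ω)
    (f : Ω → ℝ) : ∫ ω in A, f ω ∂μ = μ.real A * ∫ ω, f ω ∂μ[|A] := by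
  by_cases hA0 : μ A = 0
  · simp [Measure.restrict_eq_zero.mpr hA0, measureReal_def, hA0]
  · rw [ProbabilityTheory.cond, integral_smul_measure, smul_eq_mul, ENNReal.toReal_inv,
      ← measureReal_def, mul_inv_cancel_left₀ ((measureReal_ne_zero_iff).mpr hA0)]

theorem MeasureTheory.Integrable.cond_of_ne_zero {f : Ω → ℝ} (hf : Integrable f μ) {A : Set Ω}
    (hA : μ A ≠ 0) : Integrable f μ[|A] :=
  hf.restrict.smul_measure (ENNReal.inv_ne_top.mpr hA)

theorem integral_mul_eq_measureReal_mul_integral_cond [IsFiniteMeasure μ] {R : Ω → ℝ}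
    (hR : Measurable R) (hRbin : ∀ ω, R ω = 0 ∨ R ω = 1) (f : Ω → ℝ) :
    ∫ ω, R ω * f ω ∂μ = μ.real {ω | R ω = 1} * ∫ ω, f ω ∂μ[|{ω | R ω = 1}] := by
  have hRf : ∀ ω, R ω * f ω = {ω | R ω = 1}.indicator f ω := by
    intro ω; rcases hRbin ω with h | h <;> simp [h]
  rw [integral_congr_ae (ae_of_all _ hRf),
    integral_indicator (measurableSet_eq_fun hR measurable_const),
    setIntegral_eq_measureReal_mul_integral_cond]

theorem MeasureTheory.Integrable.indicator_one_mul {S : Set Ω} (hS : MeasurableSet S)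
    {g : Ω → ℝ} (hg : Integrable g μ) :
    Integrable (fun ω => S.indicator (1 : Ω → ℝ) ω * g ω) μ := by
  simpa [← Set.indicator_mul_left] using hg.indicator hS

theorem ProbabilityTheory.IndepFun.indicator_eq_one {β : Type*} [MeasurableSpace β]
    {T : Ω → ℝ} {Z : Ω → β} (h : IndepFun T Z μ) (t : ℝ) :
    IndepFun ({ω | T ω = t}.indicator (1 : Ω → ℝ)) Z μ := by
  have hind : {ω | T ω = t}.indicator (1 : Ω → ℝ) = ({t} : Set ℝ).indicator 1 ∘ T := by
    ext ω; by_cases hω : T ω = t <;> simp [hω]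
  rw [hind]
  exact h.comp (measurable_one.indicator (measurableSet_singleton t)) measurable_id

theorem integral_indicator_one_mul_of_indepFun [IsProbabilityMeasure μ] {S : Set Ω}
    (hS : MeasurableSet S) {g : Ω → ℝ} (hg : AEStronglyMeasurable g μ)
    (hSg : IndepFun (S.indicator (1 : Ω → ℝ)) g μ) :
    ∫ ω, S.indicator (1 : Ω → ℝ) ω * g ω ∂μ = μ.real S * ∫ ω, g ω ∂μ := by
  rw [hSg.integral_fun_mul_eq_mul_integral
    ((measurable_const.indicator hS).aestronglyMeasurable) hg, integral_indicator_one hS]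

/-- Augmented inverse-probability-weighted score: `S` is the treatment event, `π` its
probability, `h` the outcome model. -/
def aipw (S : Set Ω) (π : ℝ) (g h : Ω → ℝ) (ω : Ω) : ℝ :=
  S.indicator 1 ω * g ω / π + (1 - S.indicator 1 ω / π) * h ω

theorem integrable_aipw {S : Set Ω} (hS : MeasurableSet S) {g h : Ω → ℝ}
    (hg : Integrable g μ) (hh : Integrable h μ) (π : ℝ) : Integrable (aipw S π g h) μ := by
  refine (((hg.indicator_one_mul hS).div_const π).add
    (hh.sub ((hh.indicator_one_mul hS).div_const π))).congr (ae_of_all _ fun ω => ?_)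
  simp only [aipw, Pi.add_apply, Pi.sub_apply]
  ring

theorem integral_aipw_of_indepFun [IsProbabilityMeasure μ] {S : Set Ω} (hS : MeasurableSet S)
    (hπ : μ.real S ≠ 0) {g h : Ω → ℝ} (hg : Integrable g μ) (hh : Integrable h μ)
    (hSg : IndepFun (S.indicator (1 : Ω → ℝ)) g μ)
    (hSh : IndepFun (S.indicator (1 : Ω → ℝ)) h μ) :
    ∫ ω, aipw S (μ.real S) g h ω ∂μ = ∫ ω, g ω ∂μ := by
  have hSg_int := (hg.indicator_one_mul hS).div_const (μ.real S)
  have hSh_int := (hh.indicator_one_mul hS).div_const (μ.real S)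
  have hh_sub : Integrable (fun ω => h ω - S.indicator (1 : Ω → ℝ) ω * h ω / μ.real S) μ :=
    hh.sub hSh_int
  calc _ = ∫ ω, S.indicator (1 : Ω → ℝ) ω * g ω / μ.real S
          + (h ω - S.indicator (1 : Ω → ℝ) ω * h ω / μ.real S) ∂μ := by
        congr with ω; rw [aipw]; ring
    _ = μ.real S * (∫ ω, g ω ∂μ) / μ.real S
          + (∫ ω, h ω ∂μ - μ.real S * (∫ ω, h ω ∂μ) / μ.real S) := by
        rw [integral_add hSg_int hh_sub, integral_sub hh hSh_int, integral_div,
          integral_div, integral_indicator_one_mul_of_indepFun hS hg.1 hSg,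
          integral_indicator_one_mul_of_indepFun hS hh.1 hSh]
    _ = ∫ ω, g ω ∂μ := by field_simp; ring

theorem aipw_remainder_eq (P : Measure Ω) [IsProbabilityMeasure P] {R : Ω → ℝ}
    (hR : Measurable R) (hRbin : ∀ ω, R ω = 0 ∨ R ω = 1) (hA : P {ω | R ω = 1} ≠ 0)
    {S : Set Ω} (hS : MeasurableSet S) (hπ : P[|{ω | R ω = 1}].real S ≠ 0) {g h : Ω → ℝ}
    (hg : Integrable g P[|{ω | R ω = 1}]) (hh : Integrable h P[|{ω | R ω = 1}])
    (hSg : IndepFun (S.indicator (1 : Ω → ℝ)) g P[|{ω | R ω = 1}])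
    (hSh : IndepFun (S.indicator (1 : Ω → ℝ)) h P[|{ω | R ω = 1}]) (l v : ℝ) (hl : l ≠ 0) :
    v + ∫ ω, R ω / l * (aipw S (P[|{ω | R ω = 1}].real S) g h ω - v) ∂P
        - ∫ ω, g ω ∂P[|{ω | R ω = 1}]
      = (1 - P.real {ω | R ω = 1} / l) * (v - ∫ ω, g ω ∂P[|{ω | R ω = 1}]) := by
  have : IsProbabilityMeasure P[|{ω | R ω = 1}] := cond_isProbabilityMeasure hA
  simp_rw [div_eq_inv_mul, mul_assoc]
  rw [integral_const_mul, integral_mul_eq_measureReal_mul_integral_cond hR hRbin,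
    integral_sub (integrable_aipw hS hg hh _) (integrable_const v),
    integral_aipw_of_indepFun hS hπ hg hh hSg hSh, integral_const, probReal_univ, one_smul]
  field_simp
  ring

end

theorem stmt14_general
    {Ω 𝒳 : Type*} [MeasurableSpace Ω] [MeasurableSpace 𝒳]
    (P : Measure Ω) [IsProbabilityMeasure P]
    (X : Ω → 𝒳) (R T Y₁ Y₀ Y : Ω → ℝ) (Yt : ℝ → Ω → ℝ)
    (hX : Measurable X) (hR : Measurable R) (hT : Measurable T)
    (hRbin : ∀ ω, R ω = 0 ∨ R ω = 1)
    (hY₁2 : MemLp Y₁ 2 P) (hY₀2 : MemLp Y₀ 2 P)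
    (hY : Y = fun ω => T ω * Y₁ ω + (1 - T ω) * Y₀ ω)
    (hYt1 : Yt 1 = Y₁) (hYt0 : Yt 0 = Y₀)
    (ε : ℝ) (hε : 0 < ε)
    (hlam_pos : 0 < P {ω | R ω = 1})
    (hpi : ∀ r ∈ ({0, 1} : Set ℝ), ∀ t ∈ ({0, 1} : Set ℝ), ∀ᵐ ω ∂P,
      ε ≤ cprob (sigmaX X) (ProbabilityTheory.cond P {ω' | R ω' = r}) {ω' | T ω' = t} ω ∧
      cprob (sigmaX X) (ProbabilityTheory.cond P {ω' | R ω' = r}) {ω' | T ω' = t} ω ≤ 1 - ε)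
    (hA1 : IndepFun T (fun ω => (Y₁ ω, Y₀ ω, X ω)) (ProbabilityTheory.cond P {ω | R ω = 1}))
    (t : ℝ) (ht : t = 0 ∨ t = 1)
    :
    ∀ l : ℝ, 0 < l → l < 1 → ∀ v : ℝ,
      ∀ τd : 𝒳 → ℝ, Measurable τd → (∃ C, ∀ x, |τd x| ≤ C) →
      v + (∫ ω, (R ω / l) * ((if T ω = t then (1 : ℝ) else 0) * Y ω / ((ProbabilityTheory.cond P {ω' | R ω' = 1}) {ω' | T ω' = t}).toReal
        + (1 - (if T ω = t then (1 : ℝ) else 0) / ((ProbabilityTheory.cond P {ω' | R ω' = 1}) {ω' | T ω' = t}).toReal) * τd (X ω) - v) ∂P) - (∫ ω', Yt t ω' ∂(ProbabilityTheory.cond P {ω'' | R ω'' = 1}))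
      = (1 - (P {ω' | R ω' = 1}).toReal / l) * (v - (∫ ω', Yt t ω' ∂(ProbabilityTheory.cond P {ω'' | R ω'' = 1}))) := by
  intro l hl0 _ v τd hτd ⟨C, hC⟩
  set A : Set Ω := {ω | R ω = 1}
  set S : Set Ω := {ω | T ω = t}
  set μ : Measure Ω := P[|A]
  have hS : MeasurableSet S := hT (measurableSet_singleton t)
  have : IsProbabilityMeasure μ := cond_isProbabilityMeasure hlam_pos.ne'
  have hπ : 0 < μ.real S := by
    have ht' : t ∈ ({0, 1} : Set ℝ) := by rcases ht with rfl | rfl <;> simp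
    refine hε.trans_le (le_measureReal_of_ae_le_cprob hX.comap_le hS ?_)
    filter_upwards [cond_absolutelyContinuous.ae_le (hpi 1 (by simp) t ht')] with ω hω
    exact hω.1
  obtain ⟨hYt, hSYt⟩ :
      Integrable (Yt t) μ ∧ IndepFun (S.indicator (1 : Ω → ℝ)) (Yt t) μ := by
    rcases ht with rfl | rfl
    · exact hYt0 ▸ ⟨(hY₀2.integrable one_le_two).cond_of_ne_zero hlam_pos.ne',
        (hA1.comp measurable_id (measurable_fst.comp measurable_snd)).indicator_eq_one 0⟩
    · exact hYt1 ▸ ⟨(hY₁2.integrable one_le_two).cond_of_ne_zero hlam_pos.ne',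
        (hA1.comp measurable_id measurable_fst).indicator_eq_one 1⟩
  have hτX : Integrable (fun ω => τd (X ω)) μ :=
    .of_bound (hτd.comp hX).aestronglyMeasurable C (ae_of_all _ fun ω => hC (X ω))
  have hSτX : IndepFun (S.indicator (1 : Ω → ℝ)) (fun ω => τd (X ω)) μ :=
    (hA1.comp measurable_id (hτd.comp (measurable_snd.comp measurable_snd))).indicator_eq_one t
  have hYS : ∀ ω ∈ S, Y ω = Yt t ω := by
    intro ω hω
    rcases ht with rfl | rfl <;> simp_all [S]
  have hscore : ∀ ω, (if T ω = t then (1 : ℝ) else 0) * Y ω / (μ S).toReal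
      + (1 - (if T ω = t then (1 : ℝ) else 0) / (μ S).toReal) * τd (X ω)
      = aipw S (μ.real S) (Yt t) (fun ω => τd (X ω)) ω := by
    intro ω
    by_cases hω : T ω = t <;> simp [S, aipw, hω, hYS ω, measureReal_def]
  simp_rw [hscore]
  exact aipw_remainder_eq P hR hRbin hlam_pos.ne' hS hπ.ne' hYt hτX hSYt hSτX l v hl0.ne'

theorem stmt14
    {Ω 𝒳 : Type*} [MeasurableSpace Ω] [MeasurableSpace 𝒳] [StandardBorelSpace 𝒳]
    (P : Measure Ω) [IsProbabilityMeasure P]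
    (X : Ω → 𝒳) (R T Y₁ Y₀ Y : Ω → ℝ) (Yt : ℝ → Ω → ℝ)
    (hX : Measurable X) (hR : Measurable R) (hT : Measurable T)
    (hY₁m : Measurable Y₁) (hY₀m : Measurable Y₀)
    (hRbin : ∀ ω, R ω = 0 ∨ R ω = 1) (hTbin : ∀ ω, T ω = 0 ∨ T ω = 1)
    (hY₁2 : MemLp Y₁ 2 P) (hY₀2 : MemLp Y₀ 2 P)
    (hY : Y = fun ω => T ω * Y₁ ω + (1 - T ω) * Y₀ ω)
    (hYt1 : Yt 1 = Y₁) (hYt0 : Yt 0 = Y₀)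
    (ε : ℝ) (hε : 0 < ε)
    (hlam_pos : 0 < P {ω | R ω = 1}) (hlam_lt : P {ω | R ω = 1} < 1)
    (hlamX : ∀ᵐ ω ∂P, ε ≤ cprob (sigmaX X) P {ω' | R ω' = 1} ω ∧
      cprob (sigmaX X) P {ω' | R ω' = 1} ω ≤ 1 - ε)
    (hpi : ∀ r ∈ ({0, 1} : Set ℝ), ∀ t ∈ ({0, 1} : Set ℝ), ∀ᵐ ω ∂P,
      ε ≤ cprob (sigmaX X) (ProbabilityTheory.cond P {ω' | R ω' = r}) {ω' | T ω' = t} ω ∧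
      cprob (sigmaX X) (ProbabilityTheory.cond P {ω' | R ω' = r}) {ω' | T ω' = t} ω ≤ 1 - ε)
    (hA1 : IndepFun T (fun ω => (Y₁ ω, Y₀ ω, X ω)) (ProbabilityTheory.cond P {ω | R ω = 1}))
    (t : ℝ) (ht : t = 0 ∨ t = 1)
    :
    ∀ l : ℝ, 0 < l → l < 1 → ∀ v : ℝ,
      ∀ τd : 𝒳 → ℝ, Measurable τd → (∃ C, ∀ x, |τd x| ≤ C) →
      v + (∫ ω, (R ω / l) * ((if T ω = t then (1 : ℝ) else 0) * Y ω / ((ProbabilityTheory.cond P {ω' | R ω' = 1}) {ω' | T ω' = t}).toReal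
        + (1 - (if T ω = t then (1 : ℝ) else 0) / ((ProbabilityTheory.cond P {ω' | R ω' = 1}) {ω' | T ω' = t}).toReal) * τd (X ω) - v) ∂P) - (∫ ω', Yt t ω' ∂(ProbabilityTheory.cond P {ω'' | R ω'' = 1}))
      = (1 - (P {ω' | R ω' = 1}).toReal / l) * (v - (∫ ω', Yt t ω' ∂(ProbabilityTheory.cond P {ω'' | R ω'' = 1}))) :=
  stmt14_general P X R T Y₁ Y₀ Y Yt hX hR hT hRbin hY₁2 hY₀2 hY hYt1 hYt0 ε hε hlam_pos hpi hA1 t ht
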